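/- arXiv:1501.01335 — 7 statements merged into one kernel-verified Lean document; each statement's English description precedes it below -/
import Mathlib

section
/- Let d be a natural number and α a real number such that either (d = 2 and 1 ≤ α ≤ 2) or (d ≥ 3 and 0 < α ≤ 2). Then for all real numbers a > 0 and b > 0, a^(d+α) ≥ ((d+α)/d)·a^d·b^α − (α/d)·b^(d+α) + (α/d)·b^(d+α−3)·(2a+b)·(a−b)². -/
/-!
Put `q = d + α - 2 ≥ 1`. After clearing the denominator `d`, expanding
`(2a + b)(a - b)² = 2a³ - 3a²b + b³` and dividing by `a²`, the inequality becomes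
`(d + α) a^(d-2) b^α + 2α a b^(q-1) ≤ d a^q + 3α b^q`, a sum of two instances of the weighted
AM-GM inequality `a^u b^(q-u) ≤ (u/q) a^q + (1 - u/q) b^q` (for `u = d - 2` and `u = 1`) with
weights `d + α` and `2α`.
-/

open Real

lemma rpow_mul_rpow_sub_le {a b u q : ℝ} (ha : 0 ≤ a) (hb : 0 ≤ b) (hu : 0 ≤ u) (huq : u ≤ q)
    (hq : 0 < q) :
    a ^ u * b ^ (q - u) ≤ u / q * a ^ q + (1 - u / q) * b ^ q := by
  have h := geom_mean_le_arith_mean2_weighted (div_nonneg hu hq.le)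
    (sub_nonneg.mpr (div_le_one_of_le₀ huq hq.le)) (rpow_nonneg ha q) (rpow_nonneg hb q)
    (add_sub_cancel _ _)
  rwa [← rpow_mul ha, ← rpow_mul hb, mul_div_cancel₀ _ hq.ne', mul_one_sub,
    mul_div_cancel₀ _ hq.ne'] at h

lemma key_inequality_div_sq {D α a b : ℝ} (ha : 0 ≤ a) (hb : 0 ≤ b) (hD : 2 ≤ D)
    (hα : 0 ≤ α) (hDα : 3 ≤ D + α) :
    (D + α) * (a ^ (D - 2) * b ^ α) + 2 * α * (a * b ^ (D + α - 3))
      ≤ D * a ^ (D + α - 2) + 3 * α * b ^ (D + α - 2) := by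
  have hq0 : 0 < D + α - 2 := by linarith
  have h₁ := rpow_mul_rpow_sub_le ha hb (sub_nonneg.mpr hD) (by linarith) hq0
  have h₂ := rpow_mul_rpow_sub_le ha hb zero_le_one (by linarith) hq0
  rw [show D + α - 2 - (D - 2) = α by ring] at h₁
  rw [rpow_one, show D + α - 2 - 1 = D + α - 3 by ring] at h₂
  calc (D + α) * (a ^ (D - 2) * b ^ α) + 2 * α * (a * b ^ (D + α - 3))
      ≤ (D + α) * ((D - 2) / (D + α - 2) * a ^ (D + α - 2)
          + (1 - (D - 2) / (D + α - 2)) * b ^ (D + α - 2))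
        + 2 * α * (1 / (D + α - 2) * a ^ (D + α - 2)
          + (1 - 1 / (D + α - 2)) * b ^ (D + α - 2)) := by gcongr
    _ = D * a ^ (D + α - 2) + 3 * α * b ^ (D + α - 2) := by field_simp; ring

lemma key_inequality_real {D α a b : ℝ} (ha : 0 < a) (hb : 0 < b) (hD : 2 ≤ D) (hα : 0 ≤ α)
    (hDα : 3 ≤ D + α) :
    (D + α) * a ^ D * b ^ α - α * b ^ (D + α) + α * b ^ (D + α - 3) * (2 * a + b) * (a - b) ^ 2
      ≤ D * a ^ (D + α) := by
  have h := mul_le_mul_of_nonneg_right (key_inequality_div_sq ha.le hb.le hD hα hDα)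
    (sq_nonneg a)
  have ea : ∀ x : ℝ, a ^ (x - 2) * a ^ 2 = a ^ x := fun x => by
    rw [← rpow_natCast, ← rpow_add ha]; norm_num
  have eb : ∀ x : ℝ, b ^ (x - 3) * b ^ 3 = b ^ x := fun x => by
    rw [← rpow_natCast, ← rpow_add hb]; norm_num
  have eb' : b ^ (D + α - 3) * b = b ^ (D + α - 2) := by
    rw [← rpow_add_one hb.ne']; ring_nf
  linear_combination h - (D + α) * b ^ α * ea D + D * ea (D + α) + α * eb (D + α)
    - 3 * α * a ^ 2 * eb'

/-- Lemma 3.1 (key inequality): for `d = 2, 1 ≤ α ≤ 2` or `d ≥ 3, 0 < α ≤ 2`,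
and all `a, b > 0`,
`a^(d+α) ≥ ((d+α)/d)·a^d·b^α − (α/d)·b^(d+α) + (α/d)·b^(d+α−3)·(2a+b)·(a−b)²`. -/
theorem key_inequality (d : ℕ) (α a b : ℝ)
    (hdα : (d = 2 ∧ 1 ≤ α ∧ α ≤ 2) ∨ (3 ≤ d ∧ 0 < α ∧ α ≤ 2))
    (ha : 0 < a) (hb : 0 < b) :
    a ^ ((d : ℝ) + α) ≥
      (((d : ℝ) + α) / d) * a ^ (d : ℝ) * b ^ α
        - (α / d) * b ^ ((d : ℝ) + α)
        + (α / d) * b ^ ((d : ℝ) + α - 3) * (2 * a + b) * (a - b) ^ 2 := by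
  obtain ⟨hD, hα, hDα⟩ : 2 ≤ (d : ℝ) ∧ 0 ≤ α ∧ 3 ≤ (d : ℝ) + α := by
    rcases hdα with ⟨rfl, h₁, -⟩ | ⟨hd, h₀, -⟩
    · push_cast
      exact ⟨le_rfl, by linarith, by linarith⟩
    · have : (3 : ℝ) ≤ d := by exact_mod_cast hd
      exact ⟨by linarith, h₀.le, by linarith⟩
  have hd : (0 : ℝ) < d := by linarith
  have h := div_le_div_of_nonneg_right (key_inequality_real ha hb hD hα hDα) hd.le
  rw [mul_div_cancel_left₀ _ hd.ne'] at h
  linear_combination h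
end

section
/- Let d ≥ 3 be a natural number and α a real number with 0 < α ≤ 2. Then for all real x ≥ 0, the function h(x) = d·x^(d+α) − (d+α)·x^d + α − α·(2x+1)·(x−1)² satisfies h(x) ≥ 0. -/
/-!
Write `d = n + 1` and `g n x = n x^(n+1) - (n+1) x^n + 1`, so that `g 2 x = (2x+1)(x-1)²` and
`g (n+1) - g n = (n+1) x^n (x-1)² ≥ 0`. Since `x^(d+α) = x^d x^α`,
`h(x) = d x^d (x^α - 1) - α (x^d - 1) - α g 2 x`. The bounds `x^α - 1 ≥ α log x` and
`x log x ≥ x - 1` give `h(x) ≥ α (g n x - g 2 x)`, which is `≥ 0` as `n ≥ 2`.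
-/

open Real

/-- `g n x` of the header; it equals `(x - 1)² (1 + 2x + ⋯ + n x^(n-1))`. -/
def powGap (n : ℕ) (x : ℝ) : ℝ := n * x ^ (n + 1) - (n + 1) * x ^ n + 1

lemma powGap_two (x : ℝ) : powGap 2 x = (2 * x + 1) * (x - 1) ^ 2 := by
  simp only [powGap]; push_cast; ring

lemma powGap_succ_sub (n : ℕ) (x : ℝ) :
    powGap (n + 1) x - powGap n x = (n + 1) * x ^ n * (x - 1) ^ 2 := by
  simp only [powGap]; push_cast; ring

lemma powGap_mono {x : ℝ} (hx : 0 ≤ x) : Monotone (powGap · x) :=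
  monotone_nat_of_le_succ fun n => sub_nonneg.mp (by rw [powGap_succ_sub]; positivity)

lemma powGap_le_mul_log (n : ℕ) {x : ℝ} (hx : 0 ≤ x) :
    powGap n x ≤ (n + 1) * x ^ (n + 1) * log x - x ^ (n + 1) + 1 := by
  have h := mul_le_mul_of_nonneg_left (self_sub_one_le_mul_log hx)
    (by positivity : (0 : ℝ) ≤ (n + 1) * x ^ n)
  simp only [powGap]
  linear_combination h

lemma mul_log_le_rpow_sub_one (a : ℝ) {x : ℝ} (hx : 0 < x) : a * log x ≤ x ^ a - 1 := by
  rw [← log_rpow hx]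
  exact log_le_sub_one_of_pos (rpow_pos_of_pos hx a)

theorem h_nonneg_general (d : ℕ) (α : ℝ) (hd : 3 ≤ d) (hα : 0 < α) :
    ∀ x : ℝ, 0 ≤ x →
      0 ≤ (d : ℝ) * x ^ ((d : ℝ) + α) - ((d : ℝ) + α) * x ^ (d : ℝ) + α
            - α * (2 * x + 1) * (x - 1) ^ 2 := by
  intro x hx
  obtain ⟨n, rfl⟩ : ∃ n, d = n + 1 := ⟨d - 1, by omega⟩
  rcases hx.eq_or_lt with rfl | hx₀
  · rw [zero_rpow (by positivity), zero_rpow (by positivity)]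
    simp
  rw [rpow_add hx₀, rpow_natCast, mul_assoc α, ← powGap_two]
  have hlog := mul_le_mul_of_nonneg_left (mul_log_le_rpow_sub_one α hx₀)
    (by positivity : (0 : ℝ) ≤ (n + 1) * x ^ (n + 1))
  have hgap := mul_le_mul_of_nonneg_left
    ((powGap_mono hx (by omega : 2 ≤ n)).trans (powGap_le_mul_log n hx)) hα.le
  push_cast
  linear_combination hlog + hgap

/-- For `d ≥ 3` and `0 < α ≤ 2`, the function
`h(x) = d·x^(d+α) − (d+α)·x^d + α − α·(2x+1)·(x−1)²` is nonnegative for `x ≥ 0`. -/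
theorem h_nonneg (d : ℕ) (α : ℝ) (hd : 3 ≤ d) (hα : 0 < α) (hα2 : α ≤ 2) :
    ∀ x : ℝ, 0 ≤ x →
      0 ≤ (d : ℝ) * x ^ ((d : ℝ) + α) - ((d : ℝ) + α) * x ^ (d : ℝ) + α
            - α * (2 * x + 1) * (x - 1) ^ 2 :=
  h_nonneg_general d α hd hα
end

section
/- Let d ≥ 1, let Ω ⊂ ℝ^d be a measurable set with finite Lebesgue measure |Ω| and with I := ∫_Ω |z|² dz < ∞, and let φ_1, …, φ_k be an orthonormal family in L²(ℝ^d) with each φ_j vanishing almost everywhere outside Ω. Then the function Φ_k(μ) := Σ_{j=1}^k |φ̂_j(μ)|² satisfies, for every μ ∈ ℝ^d, |∇Φ_k(μ)| ≤ 2(2π)^{−d} √(|Ω|·I). -/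
open MeasureTheory ComplexConjugate

noncomputable def fourierHat {d : ℕ} (f : EuclideanSpace ℝ (Fin d) → ℂ)
    (μ : EuclideanSpace ℝ (Fin d)) : ℂ :=
  (((2 * Real.pi) ^ (-(d : ℝ) / 2) : ℝ) : ℂ) *
    ∫ z : EuclideanSpace ℝ (Fin d),
      Complex.exp (-(Complex.I * ((inner ℝ μ z : ℝ) : ℂ))) * f z

/-!
Writing `e_ν = 1_Ω · e^{i⟪ν, ·⟫} ∈ L²`, one has `Φ_k(ν) = (2π)^{-d} ∑_j |⟪φ_j, e_ν⟫|²`.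
By Bessel's inequality the map `x ↦ ∑_j |⟪φ_j, x⟫|²` moves by at most `‖x - y‖ (‖x‖ + ‖y‖)`,
while `‖e_ν‖ = √|Ω|` and, since `|e^{ia} - e^{ib}| ≤ |a - b|`, `‖e_ν - e_μ‖ ≤ |ν - μ| √I`.
So `Φ_k` is Lipschitz with constant `2 (2π)^{-d} √(|Ω| I)`, and this bounds its gradient
(by convention `0` wherever `Φ_k` is not differentiable).
-/

lemma abs_norm_sq_sub_norm_sq_le {F : Type*} [SeminormedAddCommGroup F] (a b : F) :
    |‖a‖ ^ 2 - ‖b‖ ^ 2| ≤ ‖a - b‖ * (‖a‖ + ‖b‖) := by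
  rw [sq_sub_sq, abs_mul, abs_of_nonneg (by positivity : 0 ≤ ‖a‖ + ‖b‖), mul_comm]
  exact mul_le_mul_of_nonneg_right (abs_norm_sub_norm_le a b) (by positivity)

section InnerProductSpace

variable {𝕜 E ι : Type*} [RCLike 𝕜] [NormedAddCommGroup E] [InnerProductSpace 𝕜 E] [Fintype ι]

lemma Orthonormal.abs_sum_norm_inner_sq_sub_le {v : ι → E} (hv : Orthonormal 𝕜 v) (x y : E) :
    |∑ i, ‖inner 𝕜 (v i) x‖ ^ 2 - ∑ i, ‖inner 𝕜 (v i) y‖ ^ 2| ≤ ‖x - y‖ * (‖x‖ + ‖y‖) := by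
  let a : E → EuclideanSpace 𝕜 ι := fun x => WithLp.toLp 2 fun i => inner 𝕜 (v i) x
  have ha : ∀ x, ‖a x‖ ^ 2 = ∑ i, ‖inner 𝕜 (v i) x‖ ^ 2 := fun x => EuclideanSpace.norm_sq_eq _
  have hbessel : ∀ x, ‖a x‖ ≤ ‖x‖ := fun x =>
    (pow_le_pow_iff_left₀ (norm_nonneg _) (norm_nonneg _) two_ne_zero).1
      ((ha x).trans_le (Orthonormal.sum_inner_products_le x hv))
  have hsub : a x - a y = a (x - y) := by ext i; simp [a, inner_sub_right]
  calc |∑ i, ‖inner 𝕜 (v i) x‖ ^ 2 - ∑ i, ‖inner 𝕜 (v i) y‖ ^ 2|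
      = |‖a x‖ ^ 2 - ‖a y‖ ^ 2| := by rw [ha, ha]
    _ ≤ ‖a x - a y‖ * (‖a x‖ + ‖a y‖) := abs_norm_sq_sub_norm_sq_le _ _
    _ ≤ ‖x - y‖ * (‖x‖ + ‖y‖) := by rw [hsub]; gcongr <;> apply hbessel

lemma norm_gradient_le_of_lip' {F : Type*} [NormedAddCommGroup F] [InnerProductSpace ℝ F]
    [CompleteSpace F] {f : F → ℝ} {x₀ : F} {C : ℝ} (hC₀ : 0 ≤ C)
    (hlip : ∀ᶠ x in nhds x₀, ‖f x - f x₀‖ ≤ C * ‖x - x₀‖) : ‖gradient f x₀‖ ≤ C := by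
  rw [gradient, LinearIsometryEquiv.norm_map]
  exact norm_fderiv_le_of_lip' ℝ hC₀ hlip

end InnerProductSpace

section L2

variable {α E : Type*} [MeasurableSpace α] {μ : Measure α}
  [NormedAddCommGroup E] [InnerProductSpace ℝ E]

lemma MeasureTheory.MemLp.norm_toLp_sq {g : α → E} (hg : MemLp g 2 μ) :
    ‖hg.toLp g‖ ^ 2 = ∫ z, ‖g z‖ ^ 2 ∂μ := by
  rw [@norm_sq_eq_re_inner ℝ, L2.inner_def, ← integral_re (L2.integrable_inner _ _)]
  refine integral_congr_ae ?_
  filter_upwards [hg.coeFn_toLp] with z hz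
  simp [hz]

lemma MeasureTheory.MemLp.norm_toLp_sq_le {g : α → E} (hg : MemLp g 2 μ) {b : α → ℝ}
    (hb : Integrable b μ) (hgb : ∀ᵐ z ∂μ, ‖g z‖ ^ 2 ≤ b z) : ‖hg.toLp g‖ ^ 2 ≤ ∫ z, b z ∂μ := by
  rw [hg.norm_toLp_sq]
  exact integral_mono_ae (hg.integrable_norm_pow two_ne_zero) hb hgb

lemma orthonormal_toLp {𝕜 ι : Type*} [RCLike 𝕜] [DecidableEq ι] {φ : ι → α → 𝕜}
    (hφ : ∀ j, MemLp (φ j) 2 μ)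
    (horth : ∀ i j, (∫ z, conj (φ i z) * φ j z ∂μ) = if i = j then 1 else 0) :
    Orthonormal 𝕜 fun j => (hφ j).toLp (φ j) := by
  rw [orthonormal_iff_ite]
  intro i j
  rw [L2.inner_def, ← horth i j]
  refine integral_congr_ae ?_
  filter_upwards [(hφ i).coeFn_toLp, (hφ j).coeFn_toLp] with z hi hj
  simp [hi, hj, mul_comm]

end L2

section PlaneWave

variable {V : Type*} [NormedAddCommGroup V] [InnerProductSpace ℝ V] {Ω : Set V}

noncomputable def planeWaveOn (Ω : Set V) (ν : V) : V → ℂ :=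
  Ω.indicator fun z => Complex.exp (Complex.I * (inner ℝ ν z : ℝ))

lemma norm_planeWaveOn_sq (ν z : V) : ‖planeWaveOn Ω ν z‖ ^ 2 = Ω.indicator 1 z := by
  by_cases hz : z ∈ Ω <;> simp [planeWaveOn, hz, Complex.norm_exp_I_mul_ofReal]

lemma norm_planeWaveOn_sub_sq_le (ν ν' z : V) :
    ‖planeWaveOn Ω ν z - planeWaveOn Ω ν' z‖ ^ 2
      ≤ ‖ν - ν'‖ ^ 2 * Ω.indicator (fun z => ‖z‖ ^ 2) z := by
  by_cases hz : z ∈ Ω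
  · have hfactor : planeWaveOn Ω ν z - planeWaveOn Ω ν' z
        = Complex.exp (Complex.I * (inner ℝ ν' z : ℝ))
          * (Complex.exp (Complex.I * (inner ℝ (ν - ν') z : ℝ)) - 1) := by
      simp only [planeWaveOn, Set.indicator_of_mem hz, inner_sub_left, mul_sub, mul_one,
        ← Complex.exp_add]
      push_cast
      ring_nf
    have hlip : ‖Complex.exp (Complex.I * (inner ℝ (ν - ν') z : ℝ)) - 1‖ ≤ ‖ν - ν'‖ * ‖z‖ :=
      Real.norm_exp_I_mul_ofReal_sub_one_le.trans (norm_inner_le_norm _ _)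
    rw [hfactor, norm_mul, Complex.norm_exp_I_mul_ofReal, one_mul, Set.indicator_of_mem hz,
      ← mul_pow]
    gcongr
  · simp [planeWaveOn, hz]

variable [MeasurableSpace V] [BorelSpace V] {μ : Measure V}

variable (μ) in
lemma memLp_planeWaveOn (hΩ : MeasurableSet Ω) (hΩfin : μ Ω ≠ ⊤) (ν : V) :
    MemLp (planeWaveOn Ω ν) 2 μ := by
  have hcont : Continuous fun z => Complex.exp (Complex.I * (inner ℝ ν z : ℝ)) := by fun_prop
  refine (memLp_two_iff_integrable_sq_norm (hcont.aestronglyMeasurable.indicator hΩ)).2 ?_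
  show Integrable (fun z => ‖planeWaveOn Ω ν z‖ ^ 2) μ
  simp_rw [norm_planeWaveOn_sq]
  exact (integrable_indicator_iff hΩ).2 (integrableOn_const hΩfin)

noncomputable def planeWaveLp (hΩ : MeasurableSet Ω) (hΩfin : μ Ω ≠ ⊤) (ν : V) : Lp ℂ 2 μ :=
  (memLp_planeWaveOn μ hΩ hΩfin ν).toLp _

variable (hΩ : MeasurableSet Ω) (hΩfin : μ Ω ≠ ⊤)
include hΩ hΩfin

lemma norm_planeWaveLp (ν : V) : ‖planeWaveLp hΩ hΩfin ν‖ = √(μ.real Ω) := by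
  rw [eq_comm, Real.sqrt_eq_iff_eq_sq (by positivity) (norm_nonneg _), planeWaveLp,
    MeasureTheory.MemLp.norm_toLp_sq]
  simp_rw [norm_planeWaveOn_sq]
  rw [integral_indicator_one hΩ]

lemma norm_planeWaveLp_sub_le (hI : IntegrableOn (fun z => ‖z‖ ^ 2) Ω μ) (ν ν' : V) :
    ‖planeWaveLp hΩ hΩfin ν - planeWaveLp hΩ hΩfin ν'‖
      ≤ ‖ν - ν'‖ * √(∫ z in Ω, ‖z‖ ^ 2 ∂μ) := by
  have hI0 : 0 ≤ ∫ z in Ω, ‖z‖ ^ 2 ∂μ := setIntegral_nonneg hΩ fun z _ => sq_nonneg ‖z‖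
  rw [← Real.sqrt_sq (norm_nonneg (ν - ν')), ← Real.sqrt_mul (sq_nonneg _),
    Real.le_sqrt (norm_nonneg _) (by positivity), planeWaveLp, planeWaveLp, ← MemLp.toLp_sub]
  calc _ ≤ ∫ z, ‖ν - ν'‖ ^ 2 * Ω.indicator (fun z => ‖z‖ ^ 2) z ∂μ :=
        MemLp.norm_toLp_sq_le _ (((integrable_indicator_iff hΩ).2 hI).const_mul _)
          (ae_of_all _ (norm_planeWaveOn_sub_sq_le ν ν'))
    _ = ‖ν - ν'‖ ^ 2 * ∫ z in Ω, ‖z‖ ^ 2 ∂μ := by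
        rw [integral_const_mul, integral_indicator hΩ]

end PlaneWave

lemma sq_rpow_neg_natCast_div_two {x : ℝ} (hx : 0 ≤ x) (n : ℕ) :
    (x ^ (-(n : ℝ) / 2)) ^ 2 = (x ^ n)⁻¹ := by
  rw [← Real.rpow_mul_natCast hx, Nat.cast_ofNat, div_mul_cancel₀ _ two_ne_zero,
    Real.rpow_neg hx, Real.rpow_natCast]

section Fourier

variable {d : ℕ} {Ω : Set (EuclideanSpace ℝ (Fin d))} (hΩ : MeasurableSet Ω)
  (hΩfin : volume Ω ≠ ⊤) {φ : EuclideanSpace ℝ (Fin d) → ℂ} (hφ : MemLp φ 2 volume)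
include hΩ hΩfin hφ

lemma fourierHat_eq_inner_planeWaveLp (hsupp : ∀ᵐ z ∂volume, z ∉ Ω → φ z = 0)
    (ν : EuclideanSpace ℝ (Fin d)) :
    fourierHat φ ν = (((2 * Real.pi) ^ (-(d : ℝ) / 2) : ℝ) : ℂ)
      * inner ℂ (planeWaveLp hΩ hΩfin ν) (hφ.toLp φ) := by
  rw [fourierHat, L2.inner_def, planeWaveLp]
  congr 1
  refine integral_congr_ae ?_
  filter_upwards [(memLp_planeWaveOn volume hΩ hΩfin ν).coeFn_toLp, hφ.coeFn_toLp, hsupp]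
    with z hwave hφz hzΩ
  rw [hwave, hφz]
  by_cases hz : z ∈ Ω
  · simp [planeWaveOn, hz, ← Complex.exp_conj, mul_comm]
  · simp [planeWaveOn, hz, hzΩ hz]

lemma norm_fourierHat_sq (hsupp : ∀ᵐ z ∂volume, z ∉ Ω → φ z = 0)
    (ν : EuclideanSpace ℝ (Fin d)) :
    ‖fourierHat φ ν‖ ^ 2
      = ((2 * Real.pi) ^ d)⁻¹ * ‖inner ℂ (hφ.toLp φ) (planeWaveLp hΩ hΩfin ν)‖ ^ 2 := by
  rw [fourierHat_eq_inner_planeWaveLp hΩ hΩfin hφ hsupp, norm_mul, mul_pow, norm_inner_symm,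
    Complex.norm_real, Real.norm_eq_abs, sq_abs, sq_rpow_neg_natCast_div_two (by positivity)]

end Fourier

theorem grad_Phi_upper_bound_general (d k : ℕ)
    (Ω : Set (EuclideanSpace ℝ (Fin d)))
    (hΩmeas : MeasurableSet Ω) (hΩfin : volume Ω < ⊤)
    (hΩI : IntegrableOn (fun z => ‖z‖ ^ 2) Ω volume)
    (φ : Fin k → EuclideanSpace ℝ (Fin d) → ℂ)
    (hL2 : ∀ j, MemLp (φ j) 2 volume)
    (hsupp : ∀ j, ∀ᵐ z ∂volume, z ∉ Ω → φ j z = 0)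
    (horth : ∀ i j, (∫ z, conj (φ i z) * φ j z) = if i = j then 1 else 0) :
    ∀ μ, ‖gradient (fun ν => ∑ j, ‖fourierHat (φ j) ν‖ ^ 2) μ‖
      ≤ 2 * ((2 * Real.pi) ^ d)⁻¹ *
          Real.sqrt ((volume Ω).toReal * ∫ z in Ω, ‖z‖ ^ 2) := by
  intro μ
  set e := planeWaveLp hΩmeas hΩfin.ne
  set f := fun j => (hL2 j).toLp (φ j)
  have hΦ : ∀ ν, ∑ j, ‖fourierHat (φ j) ν‖ ^ 2
      = ((2 * Real.pi) ^ d)⁻¹ * ∑ j, ‖inner ℂ (f j) (e ν)‖ ^ 2 := fun ν => by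
    simp_rw [norm_fourierHat_sq hΩmeas hΩfin.ne (hL2 _) (hsupp _), Finset.mul_sum, f, e]
  refine norm_gradient_le_of_lip' (by positivity) (.of_forall fun ν => ?_)
  rw [Real.norm_eq_abs, hΦ, hΦ, ← mul_sub, abs_mul, abs_of_pos (by positivity),
    Real.sqrt_mul ENNReal.toReal_nonneg]
  calc _ ≤ ((2 * Real.pi) ^ d)⁻¹ * (‖e ν - e μ‖ * (‖e ν‖ + ‖e μ‖)) := by
        gcongr
        exact (orthonormal_toLp hL2 horth).abs_sum_norm_inner_sq_sub_le _ _
    _ ≤ ((2 * Real.pi) ^ d)⁻¹ * ((‖ν - μ‖ * √(∫ z in Ω, ‖z‖ ^ 2))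
          * (√(volume.real Ω) + √(volume.real Ω))) := by
        rw [norm_planeWaveLp, norm_planeWaveLp]
        gcongr
        exact norm_planeWaveLp_sub_le hΩmeas hΩfin.ne hΩI ν μ
    _ = _ := by rw [measureReal_def]; ring

/-- If `φ_1, …, φ_k` is an orthonormal family in `L²(ℝ^d)`, each `φ_j` vanishing
a.e. outside a measurable set `Ω` of finite measure with `I = ∫_Ω |z|² dz < ∞`,
then `Φ_k(μ) = Σ_j |φ̂_j(μ)|²` satisfies `|∇Φ_k(μ)| ≤ 2(2π)^{−d} √(|Ω|·I)`
for every `μ`. -/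
theorem grad_Phi_upper_bound (d k : ℕ) (hd : 1 ≤ d)
    (Ω : Set (EuclideanSpace ℝ (Fin d)))
    (hΩmeas : MeasurableSet Ω) (hΩfin : volume Ω < ⊤)
    (hΩI : IntegrableOn (fun z => ‖z‖ ^ 2) Ω volume)
    (φ : Fin k → EuclideanSpace ℝ (Fin d) → ℂ)
    (hL2 : ∀ j, MemLp (φ j) 2 volume)
    (hsupp : ∀ j, ∀ᵐ z ∂volume, z ∉ Ω → φ j z = 0)
    (horth : ∀ i j, (∫ z, conj (φ i z) * φ j z) = if i = j then 1 else 0) :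
    ∀ μ, ‖gradient (fun ν => ∑ j, ‖fourierHat (φ j) ν‖ ^ 2) μ‖
      ≤ 2 * ((2 * Real.pi) ^ d)⁻¹ *
          Real.sqrt ((volume Ω).toReal * ∫ z in Ω, ‖z‖ ^ 2) :=
  grad_Phi_upper_bound_general d k Ω hΩmeas hΩfin hΩI φ hL2 hsupp horth
end

section
/- Let d ≥ 1 and let Ω ⊂ ℝ^d be a measurable set with 0 < |Ω| < ∞. Then for every y ∈ ℝ^d, ∫_Ω |z − y|² dz ≥ (d/(d+2)) · ω_d^{−2/d} · |Ω|^{(d+2)/d}, where ω_d = π^{d/2}/Γ(1 + d/2) is the volume of the unit ball in ℝ^d. -/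
/-!
Bathtub argument: among sets of a given finite measure, `∫ ‖z - y‖ ^ p` is smallest on the ball
centred at `y`, since passing from `Ω` to the ball `B` of the same measure trades `Ω \ B`, where
the integrand is `≥ r ^ p`, for `B \ Ω`, of equal measure, where it is `≤ r ^ p`. In polar
coordinates `∫_B ‖z - y‖ ^ p = d ω ∫₀ʳ t ^ (d - 1 + p) dt = d / (d + p) · ω r ^ (d + p)`, and the
radius is fixed by `ω r ^ d = |Ω|`.
-/

open MeasureTheory Metric Set Module
open scoped ENNReal

section Bathtub

variable {α : Type*} [MeasurableSpace α] {μ : Measure α} {s t : Set α} {f : α → ℝ≥0∞} {c : ℝ≥0∞}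

theorem setLIntegral_le_setLIntegral_of_measure_eq (hs : MeasurableSet s) (ht : MeasurableSet t)
    (hμ : μ s = μ t) (ht_fin : μ t ≠ ∞) (hfs : ∀ x ∈ s \ t, f x ≤ c)
    (hft : ∀ x ∈ t \ s, c ≤ f x) :
    ∫⁻ x in s, f x ∂μ ≤ ∫⁻ x in t, f x ∂μ := by
  rw [← lintegral_inter_add_sdiff f s ht, ← lintegral_inter_add_sdiff f t hs, inter_comm t s]
  gcongr ∫⁻ x in s ∩ t, f x ∂μ + ?_
  have hdiff : μ (s \ t) = μ (t \ s) :=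
    measure_sdiff_symm hs.nullMeasurableSet ht.nullMeasurableSet hμ
      (measure_ne_top_of_subset inter_subset_right ht_fin)
  calc ∫⁻ x in s \ t, f x ∂μ ≤ ∫⁻ _ in s \ t, c ∂μ := setLIntegral_mono' (hs.diff ht) hfs
    _ = ∫⁻ _ in t \ s, c ∂μ := by rw [setLIntegral_const, setLIntegral_const, hdiff]
    _ ≤ ∫⁻ x in t \ s, f x ∂μ := setLIntegral_mono' (ht.diff hs) hft

end Bathtub

theorem integral_Ioi_pow_mul_indicator_Iic_pow (n p : ℕ) {r : ℝ} (hr : 0 ≤ r) :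
    ∫ t in Ioi 0, t ^ n * (Iic r).indicator (· ^ p) t = r ^ (n + p + 1) / (n + p + 1 : ℕ) := by
  have hind : (fun t : ℝ ↦ t ^ n * (Iic r).indicator (· ^ p) t) =
      (Iic r).indicator (· ^ (n + p)) := by
    ext t
    by_cases ht : t ∈ Iic r <;> simp [ht, pow_add]
  rw [hind, setIntegral_indicator measurableSet_Iic, Ioi_inter_Iic,
    ← intervalIntegral.integral_of_le hr, integral_pow]
  simp [zero_pow (Nat.succ_ne_zero _)]

theorem mul_rpow_one_div_add {ω m d q : ℝ} (hω : 0 < ω) (hm : 0 ≤ m) (hd : 0 < d) :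
    ω * ((m / ω) ^ (1 / d)) ^ (d + q) = ω ^ (-q / d) * m ^ ((d + q) / d) := by
  rw [← Real.rpow_mul (div_nonneg hm hω.le), one_div_mul_eq_div, Real.div_rpow hm hω.le,
    show -q / d = 1 - (d + q) / d by field_simp; ring, Real.rpow_sub hω, Real.rpow_one]
  ring

theorem EuclideanSpace.volume_real_ball_zero_one (ι : Type*) [Fintype ι] [Nonempty ι] :
    volume.real (ball (0 : EuclideanSpace ℝ ι) 1) =
      Real.pi ^ ((Fintype.card ι : ℝ) / 2) / Real.Gamma (1 + (Fintype.card ι : ℝ) / 2) := by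
  rw [measureReal_def, EuclideanSpace.volume_ball, ENNReal.ofReal_one, one_pow, one_mul,
    ENNReal.toReal_ofReal (by positivity), Real.sqrt_eq_rpow, ← Real.rpow_natCast,
    ← Real.rpow_mul Real.pi_pos.le, add_comm]
  ring_nf

section AddHaar

variable {E : Type*} [NormedAddCommGroup E] [NormedSpace ℝ E] [FiniteDimensional ℝ E]
  [MeasurableSpace E] [BorelSpace E] (μ : Measure E) [μ.IsAddHaarMeasure]

theorem integral_closedBall_norm_sub_pow [Nontrivial E] (y : E) {r : ℝ} (hr : 0 ≤ r) (p : ℕ) :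
    ∫ z in closedBall y r, ‖z - y‖ ^ p ∂μ =
      finrank ℝ E / (finrank ℝ E + p) * μ.real (ball 0 1) * r ^ (finrank ℝ E + p) := by
  have hd : 1 ≤ finrank ℝ E := finrank_pos
  have hball : ∫ z in closedBall y r, ‖z - y‖ ^ p ∂μ =
      ∫ z, (Iic r).indicator (· ^ p) ‖z - y‖ ∂μ := by
    rw [← integral_indicator measurableSet_closedBall]
    congr 1 with z
    by_cases hz : ‖z - y‖ ≤ r <;> simp [indicator, dist_eq_norm, hz]
  rw [hball, integral_sub_right_eq_self (fun z ↦ (Iic r).indicator (· ^ p) ‖z‖) y,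
    integral_fun_norm_addHaar, nsmul_eq_mul]
  simp_rw [smul_eq_mul]
  rw [integral_Ioi_pow_mul_indicator_Iic_pow _ _ hr,
    show finrank ℝ E - 1 + p + 1 = finrank ℝ E + p by omega]
  push_cast
  field_simp

theorem lintegral_closedBall_norm_sub_pow [Nontrivial E] (y : E) {r : ℝ} (hr : 0 ≤ r) (p : ℕ) :
    ∫⁻ z in closedBall y r, ENNReal.ofReal (‖z - y‖ ^ p) ∂μ =
      ENNReal.ofReal (finrank ℝ E / (finrank ℝ E + p) * μ.real (ball 0 1) *
        r ^ (finrank ℝ E + p)) := by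
  rw [← integral_closedBall_norm_sub_pow μ y hr p, ofReal_integral_eq_lintegral_ofReal]
  · exact (by fun_prop : Continuous fun z : E ↦ ‖z - y‖ ^ p).continuousOn.integrableOn_compact
      (isCompact_closedBall y r)
  · exact ae_of_all _ fun z ↦ by positivity

theorem ofReal_le_lintegral_norm_sub_pow [Nontrivial E] {Ω : Set E} (hΩ : MeasurableSet Ω)
    (hΩ_fin : μ Ω ≠ ∞) (y : E) (p : ℕ) :
    ENNReal.ofReal (finrank ℝ E / (finrank ℝ E + p) *
        μ.real (ball 0 1) ^ (-(p : ℝ) / finrank ℝ E) *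
        μ.real Ω ^ (((finrank ℝ E : ℝ) + p) / finrank ℝ E)) ≤
      ∫⁻ z in Ω, ENNReal.ofReal (‖z - y‖ ^ p) ∂μ := by
  set d := finrank ℝ E
  set ω := μ.real (ball (0 : E) 1)
  set m := μ.real Ω
  have hd : (0 : ℝ) < d := by exact_mod_cast finrank_pos
  have hω : 0 < ω := ENNReal.toReal_pos (measure_ball_pos μ 0 one_pos).ne' measure_ball_lt_top.ne
  have hm : 0 ≤ m := measureReal_nonneg
  set r := (m / ω) ^ (1 / (d : ℝ))
  have hr : 0 ≤ r := by positivity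
  have hball : μ (closedBall y r) = μ Ω := by
    rw [Measure.addHaar_closedBall μ y hr, ← Real.rpow_natCast, ← Real.rpow_mul (by positivity),
      one_div_mul_cancel hd.ne', Real.rpow_one, ← ofReal_measureReal measure_ball_lt_top.ne,
      ← ENNReal.ofReal_mul (by positivity), div_mul_cancel₀ _ hω.ne', ofReal_measureReal hΩ_fin]
  calc _ = ENNReal.ofReal (d / (d + p) * ω * r ^ (d + p)) := by
        rw [mul_assoc _ ω, ← Real.rpow_natCast, Nat.cast_add, mul_rpow_one_div_add hω hm hd,
          mul_assoc]
    _ = ∫⁻ z in closedBall y r, ENNReal.ofReal (‖z - y‖ ^ p) ∂μ :=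
        (lintegral_closedBall_norm_sub_pow μ y hr p).symm
    _ ≤ ∫⁻ z in Ω, ENNReal.ofReal (‖z - y‖ ^ p) ∂μ := by
        refine setLIntegral_le_setLIntegral_of_measure_eq (c := ENNReal.ofReal (r ^ p))
          measurableSet_closedBall hΩ hball hΩ_fin (fun z hz ↦ ?_) (fun z hz ↦ ?_)
        · have : ‖z - y‖ ≤ r := by simpa [dist_eq_norm] using hz.1
          gcongr
        · have : r < ‖z - y‖ := by simpa [dist_eq_norm] using hz.2
          gcongr

end AddHaar

theorem moment_of_inertia_lower_bound_general (d : ℕ) (hd : 1 ≤ d)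
    (Ω : Set (EuclideanSpace ℝ (Fin d)))
    (hΩmeas : MeasurableSet Ω) (hΩfin : volume Ω < ⊤)
    (y : EuclideanSpace ℝ (Fin d)) :
    ENNReal.ofReal (((d : ℝ) / ((d : ℝ) + 2)) *
        (Real.pi ^ ((d : ℝ) / 2) / Real.Gamma (1 + (d : ℝ) / 2)) ^ (-(2 : ℝ) / (d : ℝ)) *
        (volume Ω).toReal ^ (((d : ℝ) + 2) / (d : ℝ)))
      ≤ ∫⁻ z in Ω, ENNReal.ofReal (‖z - y‖ ^ 2) := by
  have : Nonempty (Fin d) := ⟨⟨0, hd⟩⟩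
  have h := ofReal_le_lintegral_norm_sub_pow volume hΩmeas hΩfin.ne y 2
  rw [finrank_euclideanSpace_fin, EuclideanSpace.volume_real_ball_zero_one, Fintype.card_fin]
    at h
  exact_mod_cast h

/-- Lower bound on the moment of inertia: if `Ω ⊂ ℝ^d` is measurable with
`0 < |Ω| < ∞`, then for every `y`,
`∫_Ω |z − y|² dz ≥ (d/(d+2))·ω_d^{−2/d}·|Ω|^{(d+2)/d}`, where
`ω_d = π^{d/2}/Γ(1+d/2)` is the volume of the unit ball (the integral on the left
is allowed to be `+∞`). -/
theorem moment_of_inertia_lower_bound (d : ℕ) (hd : 1 ≤ d)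
    (Ω : Set (EuclideanSpace ℝ (Fin d)))
    (hΩmeas : MeasurableSet Ω) (hΩpos : 0 < volume Ω) (hΩfin : volume Ω < ⊤)
    (y : EuclideanSpace ℝ (Fin d)) :
    ENNReal.ofReal (((d : ℝ) / ((d : ℝ) + 2)) *
        (Real.pi ^ ((d : ℝ) / 2) / Real.Gamma (1 + (d : ℝ) / 2)) ^ (-(2 : ℝ) / (d : ℝ)) *
        (volume Ω).toReal ^ (((d : ℝ) + 2) / (d : ℝ)))
      ≤ ∫⁻ z in Ω, ENNReal.ofReal (‖z - y‖ ^ 2) :=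
  moment_of_inertia_lower_bound_general d hd Ω hΩmeas hΩfin y
end

section
/- Let d ≥ 1 be a natural number and let θ : [0,∞) → [0,1] be a measurable function with ∫_0^∞ θ(a) da = 1. Then ∫_0^∞ a^d θ(a) da ≥ 1/(d+1). -/
/-!
Bathtub principle: among weights `0 ≤ θ ≤ 1` of total mass `μ s`, the indicator of the sublevel
set `s = {φ ≤ 1}` minimises `∫ φ θ`, because pointwise `(φ - 1) (θ - 1_s) ≥ 0`. With `φ a = a ^ d`
and `s = (0, 1]` this gives `∫ a ^ d θ ≥ ∫₀¹ a ^ d = 1 / (d + 1)`.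
-/

open MeasureTheory Set

theorem ofReal_add_indicator_le_ofReal_mul_add_indicator {α : Type*} {s : Set α} {φ θ : α → ℝ}
    {x : α} (hφ : 0 ≤ φ x) (hφs : x ∈ s → φ x ≤ 1) (hφsc : x ∉ s → 1 ≤ φ x)
    (hθ : 0 ≤ θ x ∧ θ x ≤ 1) :
    ENNReal.ofReal (θ x) + s.indicator (fun y => ENNReal.ofReal (φ y)) x
      ≤ ENNReal.ofReal (φ x * θ x) + s.indicator 1 x := by
  by_cases hx : x ∈ s
  · simp only [indicator_of_mem hx, Pi.one_apply]
    rw [← ENNReal.ofReal_one, ← ENNReal.ofReal_add hθ.1 hφ,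
      ← ENNReal.ofReal_add (mul_nonneg hφ hθ.1) zero_le_one]
    exact ENNReal.ofReal_le_ofReal (by nlinarith [hφs hx])
  · simp only [indicator_of_notMem hx, add_zero]
    exact ENNReal.ofReal_le_ofReal (by nlinarith [hφsc hx])

theorem setLIntegral_ofReal_le_lintegral_ofReal_mul {α : Type*} [MeasurableSpace α]
    {μ : Measure α} {s : Set α} (hs : MeasurableSet s) (hμs : μ s ≠ ⊤) {φ θ : α → ℝ}
    (hφ : ∀ᵐ x ∂μ, 0 ≤ φ x) (hφs : ∀ᵐ x ∂μ, x ∈ s → φ x ≤ 1)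
    (hφsc : ∀ᵐ x ∂μ, x ∉ s → 1 ≤ φ x) (hθ : ∀ᵐ x ∂μ, 0 ≤ θ x ∧ θ x ≤ 1)
    (hθs : ∫⁻ x, ENNReal.ofReal (θ x) ∂μ = μ s) :
    ∫⁻ x in s, ENNReal.ofReal (φ x) ∂μ ≤ ∫⁻ x, ENNReal.ofReal (φ x * θ x) ∂μ := by
  have key : μ s + ∫⁻ x in s, ENNReal.ofReal (φ x) ∂μ
      ≤ μ s + ∫⁻ x, ENNReal.ofReal (φ x * θ x) ∂μ :=
    calc μ s + ∫⁻ x in s, ENNReal.ofReal (φ x) ∂μ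
        = ∫⁻ x, ENNReal.ofReal (θ x) ∂μ
          + ∫⁻ x, s.indicator (fun y => ENNReal.ofReal (φ y)) x ∂μ := by
          rw [hθs, lintegral_indicator hs]
      _ ≤ ∫⁻ x, ENNReal.ofReal (θ x) + s.indicator (fun y => ENNReal.ofReal (φ y)) x ∂μ :=
          le_lintegral_add _ _
      _ ≤ ∫⁻ x, ENNReal.ofReal (φ x * θ x) + s.indicator 1 x ∂μ := by
          refine lintegral_mono_ae ?_
          filter_upwards [hφ, hφs, hφsc, hθ] with x hx0 hxs hxsc hx01
          exact ofReal_add_indicator_le_ofReal_mul_add_indicator hx0 hxs hxsc hx01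
      _ = μ s + ∫⁻ x, ENNReal.ofReal (φ x * θ x) ∂μ := by
          rw [lintegral_add_right _ (measurable_one.indicator hs), lintegral_indicator_one hs,
            add_comm]
  exact (ENNReal.add_le_add_iff_left hμs).1 key

theorem setLIntegral_Ioc_zero_one_ofReal_pow (d : ℕ) :
    ∫⁻ a in Ioc (0 : ℝ) 1, ENNReal.ofReal (a ^ d) = ENNReal.ofReal (1 / ((d : ℝ) + 1)) := by
  rw [← ofReal_integral_eq_lintegral_ofReal (continuous_pow d).integrableOn_Ioc
      ((ae_restrict_of_forall_mem measurableSet_Ioc) fun a ha => pow_nonneg ha.1.le d),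
    ← intervalIntegral.integral_of_le zero_le_one]
  simp [integral_pow]

theorem moment_lower_bound_general (d : ℕ) (θ : ℝ → ℝ)
    (h01 : ∀ a, 0 ≤ a → 0 ≤ θ a ∧ θ a ≤ 1)
    (hint : ∫ a in Set.Ioi (0 : ℝ), θ a = 1) :
    ENNReal.ofReal (1 / ((d : ℝ) + 1))
      ≤ ∫⁻ a in Set.Ioi (0 : ℝ), ENNReal.ofReal (a ^ d * θ a) := by
  have hpos : ∀ᵐ a ∂volume.restrict (Ioi (0 : ℝ)), 0 < a :=
    ae_restrict_of_forall_mem measurableSet_Ioi fun a ha => ha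
  have hθ : ∀ᵐ a ∂volume.restrict (Ioi (0 : ℝ)), 0 ≤ θ a ∧ θ a ≤ 1 := by
    filter_upwards [hpos] with a ha using h01 a ha.le
  have hs : volume.restrict (Ioi (0 : ℝ)) (Iic 1) = 1 := by
    rw [Measure.restrict_apply measurableSet_Iic, inter_comm, Ioi_inter_Iic, Real.volume_Ioc]
    norm_num
  have hmass :
      ∫⁻ a in Ioi (0 : ℝ), ENNReal.ofReal (θ a) = volume.restrict (Ioi (0 : ℝ)) (Iic 1) := by
    rw [← ofReal_integral_eq_lintegral_ofReal
        (Integrable.of_integral_ne_zero (by rw [hint]; exact one_ne_zero))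
        (by filter_upwards [hθ] with a ha using ha.1), hint, hs, ENNReal.ofReal_one]
  have hbathtub := setLIntegral_ofReal_le_lintegral_ofReal_mul (measurableSet_Iic (a := (1 : ℝ)))
    (hs ▸ ENNReal.one_ne_top) (φ := fun a => a ^ d)
    (by filter_upwards [hpos] with a ha using pow_nonneg ha.le d)
    (by filter_upwards [hpos] with a ha has using pow_le_one₀ ha.le has)
    (by filter_upwards [hpos] with a _ has using one_le_pow₀ (le_of_lt (not_le.1 has))) hθ hmass
  rwa [Measure.restrict_restrict measurableSet_Iic, inter_comm, Ioi_inter_Iic,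
    setLIntegral_Ioc_zero_one_ofReal_pow] at hbathtub

/-- For `d ≥ 1` and measurable `θ : [0,∞) → [0,1]` with `∫_0^∞ θ(a) da = 1`,
one has `∫_0^∞ a^d θ(a) da ≥ 1/(d+1)` (the integral being allowed to be `+∞`). -/
theorem moment_lower_bound (d : ℕ) (hd : 1 ≤ d) (θ : ℝ → ℝ)
    (hmeas : Measurable θ) (h01 : ∀ a, 0 ≤ a → 0 ≤ θ a ∧ θ a ≤ 1)
    (hint : ∫ a in Set.Ioi (0 : ℝ), θ a = 1) :
    ENNReal.ofReal (1 / ((d : ℝ) + 1))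
      ≤ ∫⁻ a in Set.Ioi (0 : ℝ), ENNReal.ofReal (a ^ d * θ a) :=
  moment_lower_bound_general d θ h01 hint
end

section
/- Let d ≥ 1 be a natural number and let θ : [0,∞) → [0,1] be a measurable function with ∫_0^∞ θ(a) da = 1 and ∫_0^∞ a^d θ(a) da < ∞. Then there exists τ ≥ 0 such that ∫_τ^{τ+1} a^d da = ∫_0^∞ a^d θ(a) da, i.e. ((τ+1)^{d+1} − τ^{d+1})/(d+1) = ∫_0^∞ a^d θ(a) da. -/
/-!
Since `0 ≤ θ ≤ 1` has total mass `1` and `a ↦ a ^ d` is nondecreasing, the `θ`-weighted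
integral of `a ^ d` is smallest when all the mass sits on `(0, 1]` (bathtub principle), so it is
at least `∫₀¹ a ^ d = 1 / (d + 1)`. The window integral `τ ↦ ∫_τ^{τ+1} a ^ d` is continuous,
equals `1 / (d + 1)` at `τ = 0` and is at least `τ ^ d ≥ τ` for `τ ≥ 1`, so the intermediate
value theorem produces `τ`.
-/

open MeasureTheory Set

theorem setIntegral_Ioc_le_setIntegral_mul_of_monotoneOn {f θ : ℝ → ℝ} {c : ℝ} (hc : 0 < c)
    (hf : MonotoneOn f (Ioi 0)) (hθ : ∀ a ∈ Ioi (0 : ℝ), θ a ∈ Icc 0 1)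
    (hθint : ∫ a in Ioi 0, θ a = c) (hfi : IntegrableOn f (Ioc 0 c))
    (hfθ : IntegrableOn (fun a => f a * θ a) (Ioi 0)) :
    ∫ a in Ioc 0 c, f a ≤ ∫ a in Ioi 0, f a * θ a := by
  have hθi : IntegrableOn θ (Ioi 0) := by
    by_contra h
    rw [integral_undef h] at hθint
    exact hc.ne hθint
  have hgi : Integrable ((Ioc 0 c).indicator fun a => f a - f c) :=
    (hfi.sub (integrableOn_const (by simp))).integrable_indicator measurableSet_Ioc
  -- `(f a - f c) * (θ a - 1) ≥ 0` below `c` and `(f a - f c) * θ a ≥ 0` above it.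
  have hpt : ∀ a ∈ Ioi (0 : ℝ),
      f c * θ a + (Ioc 0 c).indicator (fun a => f a - f c) a ≤ f a * θ a := by
    intro a ha
    have hc' : c ∈ Ioi (0 : ℝ) := hc
    obtain ⟨hθ0, hθ1⟩ := hθ a ha
    by_cases hac : a ≤ c
    · rw [indicator_of_mem (show a ∈ Ioc 0 c from ⟨ha, hac⟩)]
      nlinarith [hf ha hc' hac]
    · rw [indicator_of_notMem (fun h => hac h.2)]
      nlinarith [hf hc' ha (le_of_not_ge hac)]
  calc ∫ a in Ioc 0 c, f a
      = ∫ a in Ioi 0, f c * θ a + (Ioc 0 c).indicator (fun a => f a - f c) a := by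
        rw [integral_add (hθi.const_mul _) hgi.integrableOn, integral_const_mul, hθint,
          setIntegral_indicator measurableSet_Ioc, inter_eq_right.2 Ioc_subset_Ioi_self,
          integral_sub hfi (integrableOn_const (by simp)), setIntegral_const,
          Real.volume_real_Ioc_of_le hc.le, smul_eq_mul]
        ring
    _ ≤ ∫ a in Ioi 0, f a * θ a :=
        setIntegral_mono_on ((hθi.const_mul _).add hgi.integrableOn) hfθ measurableSet_Ioi hpt

theorem pow_le_integral_pow_self_add_one {τ : ℝ} (hτ : 0 ≤ τ) (d : ℕ) :
    τ ^ d ≤ ∫ a in τ..τ + 1, a ^ d := by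
  calc τ ^ d = ∫ _ in τ..τ + 1, τ ^ d := by simp
    _ ≤ ∫ a in τ..τ + 1, a ^ d :=
        intervalIntegral.integral_mono_on (by linarith) intervalIntegrable_const
          (intervalIntegral.intervalIntegrable_pow d) fun a ha => pow_le_pow_left₀ hτ ha.1 d

theorem exists_nonneg_integral_pow_self_add_one_eq {d : ℕ} (hd : 1 ≤ d) {M : ℝ}
    (hM : 1 / ((d : ℝ) + 1) ≤ M) : ∃ τ : ℝ, 0 ≤ τ ∧ ∫ a in τ..τ + 1, a ^ d = M := by
  set T := max M 1
  have hT : 1 ≤ T := le_max_right M 1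
  have hcont : Continuous fun τ : ℝ => ∫ a in τ..τ + 1, a ^ d := by
    simp only [integral_pow]
    fun_prop
  have hlow : ∫ a in (0 : ℝ)..0 + 1, a ^ d ≤ M := by simpa [integral_pow] using hM
  have hhigh : M ≤ ∫ a in T..T + 1, a ^ d :=
    calc M ≤ T := le_max_left M 1
      _ ≤ T ^ d := le_self_pow₀ hT (by omega)
      _ ≤ ∫ a in T..T + 1, a ^ d := pow_le_integral_pow_self_add_one (by linarith) d
  obtain ⟨τ, hτ, hτM⟩ :=
    intermediate_value_Icc (by linarith) hcont.continuousOn ⟨hlow, hhigh⟩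
  exact ⟨τ, hτ.1, hτM⟩

theorem exists_tau_general (d : ℕ) (hd : 1 ≤ d) (θ : ℝ → ℝ)
    (h01 : ∀ a, 0 ≤ a → 0 ≤ θ a ∧ θ a ≤ 1)
    (hint : ∫ a in Set.Ioi (0 : ℝ), θ a = 1)
    (hfin : IntegrableOn (fun a => a ^ d * θ a) (Set.Ioi 0)) :
    ∃ τ : ℝ, 0 ≤ τ ∧
      (∫ a in τ..(τ + 1), a ^ d) = (∫ a in Set.Ioi (0 : ℝ), a ^ d * θ a) ∧
      ((τ + 1) ^ (d + 1) - τ ^ (d + 1)) / ((d : ℝ) + 1)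
        = ∫ a in Set.Ioi (0 : ℝ), a ^ d * θ a := by
  have hmoment : 1 / ((d : ℝ) + 1) ≤ ∫ a in Ioi 0, a ^ d * θ a :=
    calc 1 / ((d : ℝ) + 1) = ∫ a in Ioc 0 1, a ^ d := by
          rw [← intervalIntegral.integral_of_le zero_le_one, integral_pow]
          norm_num
      _ ≤ ∫ a in Ioi 0, a ^ d * θ a :=
          setIntegral_Ioc_le_setIntegral_mul_of_monotoneOn one_pos
            (fun a ha _ _ hab => pow_le_pow_left₀ (le_of_lt ha) hab d)
            (fun a ha => h01 a (le_of_lt ha)) hint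
            (intervalIntegral.intervalIntegrable_pow d).1 hfin
  obtain ⟨τ, hτ, hτM⟩ := exists_nonneg_integral_pow_self_add_one_eq hd hmoment
  exact ⟨τ, hτ, hτM, integral_pow (a := τ) d ▸ hτM⟩

/-- For `d ≥ 1` and measurable `θ : [0,∞) → [0,1]` with `∫_0^∞ θ(a) da = 1` and
`∫_0^∞ a^d θ(a) da < ∞`, there exists `τ ≥ 0` with
`∫_τ^{τ+1} a^d da = ∫_0^∞ a^d θ(a) da`, i.e.
`((τ+1)^{d+1} − τ^{d+1})/(d+1) = ∫_0^∞ a^d θ(a) da`. -/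
theorem exists_tau (d : ℕ) (hd : 1 ≤ d) (θ : ℝ → ℝ)
    (hmeas : Measurable θ) (h01 : ∀ a, 0 ≤ a → 0 ≤ θ a ∧ θ a ≤ 1)
    (hint : ∫ a in Set.Ioi (0 : ℝ), θ a = 1)
    (hfin : IntegrableOn (fun a => a ^ d * θ a) (Set.Ioi 0)) :
    ∃ τ : ℝ, 0 ≤ τ ∧
      (∫ a in τ..(τ + 1), a ^ d) = (∫ a in Set.Ioi (0 : ℝ), a ^ d * θ a) ∧
      ((τ + 1) ^ (d + 1) - τ ^ (d + 1)) / ((d : ℝ) + 1)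
        = ∫ a in Set.Ioi (0 : ℝ), a ^ d * θ a :=
  exists_tau_general d hd θ h01 hint hfin
end

section
/- Let d ≥ 1 be a natural number, let α > 0 be a real number, and let θ : [0,∞) → [0,1] be a measurable function with ∫_0^∞ θ(a) da = 1. Suppose τ ≥ 0 satisfies ∫_τ^{τ+1} a^d da = ∫_0^∞ a^d θ(a) da < ∞. Then ∫_τ^{τ+1} a^{α+d} da ≤ ∫_0^∞ a^{α+d} θ(a) da. -/
open MeasureTheory Set

/-!
Write `a ^ (α + d) = ψ (a ^ d)` with `ψ x = x ^ ((α + d) / d)` convex, and let `L` be the secant of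
`ψ` through `τ ^ d` and `(τ + 1) ^ d`. Then `h a = a ^ (α + d) - L (a ^ d)` is `≤ 0` on `[τ, τ + 1]`
and `≥ 0` on the rest of `[0, ∞)`. Since `L` is affine, the conditions `∫ θ = 1` and
`∫ a ^ d θ = ∫_τ^{τ+1} a ^ d` say that `L (a ^ d)` has the same integral against `θ` as over
`[τ, τ + 1]`; hence the difference of the two sides is
`∫_{[τ,τ+1]} h (θ - 1) + ∫_{outside} h θ ≥ 0` (Steffensen's argument).
-/

theorem ConvexOn.exists_secant_line {s : Set ℝ} {f : ℝ → ℝ} (hf : ConvexOn ℝ s f) {x₀ x₁ : ℝ}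
    (h₀ : x₀ ∈ s) (h₁ : x₁ ∈ s) (hlt : x₀ < x₁) :
    ∃ b c : ℝ, (∀ x ∈ Icc x₀ x₁, f x ≤ b * x + c) ∧
      ∀ x ∈ s, x ∉ Ioo x₀ x₁ → b * x + c ≤ f x := by
  set m := slope f x₀ x₁
  have hm := hf.slope_mono h₀
  have hx₁ : x₁ ∈ s \ {x₀} := ⟨h₁, hlt.ne'⟩
  have hchord : ∀ x, f x = f x₀ + (x - x₀) * slope f x₀ x := fun x => by
    rw [← smul_eq_mul, sub_smul_slope, vsub_eq_sub]; ring
  refine ⟨m, f x₀ - m * x₀, fun x hx => ?_, fun x hxs hx => ?_⟩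
  · rcases eq_or_ne x x₀ with rfl | hne
    · linarith
    have := hm ⟨hf.1.ordConnected.out h₀ h₁ hx, hne⟩ hx₁ hx.2
    nlinarith [hchord x, hx.1]
  · rcases lt_trichotomy x x₀ with hlt' | rfl | hgt
    · have := hm ⟨hxs, hlt'.ne⟩ hx₁ (hlt'.trans hlt).le
      nlinarith [hchord x]
    · linarith
    · have := hm hx₁ ⟨hxs, hgt.ne'⟩ (not_lt.1 fun h => hx ⟨hgt, h⟩)
      nlinarith [hchord x]

/-- The secant of `x ↦ x ^ (q / d)`, read in the variable `a ^ d`. -/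
theorem exists_secant_line_rpow_in_pow {d : ℕ} (hd : d ≠ 0) {q : ℝ} (hdq : d ≤ q)
    {x₀ x₁ : ℝ} (h₀ : 0 ≤ x₀) (hlt : x₀ < x₁) :
    ∃ b c : ℝ, (∀ a ∈ Icc x₀ x₁, a ^ q ≤ b * a ^ d + c) ∧
      ∀ a, 0 ≤ a → a ∉ Ioo x₀ x₁ → b * a ^ d + c ≤ a ^ q := by
  have hdpos : (0 : ℝ) < d := by positivity
  have hpow : ∀ a : ℝ, 0 ≤ a → (a ^ d) ^ (q / d) = a ^ q := fun a ha => by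
    rw [← Real.rpow_natCast, ← Real.rpow_mul ha, mul_div_cancel₀ _ hdpos.ne']
  obtain ⟨b, c, hle, hge⟩ := (convexOn_rpow ((one_le_div hdpos).2 hdq)).exists_secant_line
    (pow_nonneg h₀ d) (pow_nonneg (h₀.trans hlt.le) d) (pow_lt_pow_left₀ hlt h₀ hd)
  refine ⟨b, c, fun a ha => ?_, fun a ha hout => ?_⟩
  · have ha₀ := h₀.trans ha.1
    rw [← hpow a ha₀]
    exact hle _ ⟨pow_le_pow_left₀ h₀ ha.1 d, pow_le_pow_left₀ ha₀ ha.2 d⟩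
  · rw [← hpow a ha]
    exact hge _ (pow_nonneg ha d) fun h =>
      hout ⟨lt_of_pow_lt_pow_left₀ d ha h.1, lt_of_pow_lt_pow_left₀ d (h₀.trans hlt.le) h.2⟩

variable {X : Type*} [MeasurableSpace X] {μ : Measure X} {s t : Set X}

theorem setIntegral_le_setIntegral_mul_of_nonpos_of_nonneg {h θ : X → ℝ}
    (hs : MeasurableSet s) (ht : MeasurableSet t) (hts : t ⊆ s)
    (hh : IntegrableOn h t μ) (hhθ : IntegrableOn (fun x => h x * θ x) s μ)
    (hθ₁ : ∀ x ∈ t, θ x ≤ 1) (hθ₀ : ∀ x ∈ s \ t, 0 ≤ θ x)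
    (hneg : ∀ x ∈ t, h x ≤ 0) (hpos : ∀ x ∈ s \ t, 0 ≤ h x) :
    ∫ x in t, h x ∂μ ≤ ∫ x in s, h x * θ x ∂μ := by
  rw [← sdiff_union_of_subset hts, setIntegral_union disjoint_sdiff_left ht
    (hhθ.mono_set sdiff_subset) (hhθ.mono_set hts)]
  have hout : 0 ≤ ∫ x in s \ t, h x * θ x ∂μ :=
    setIntegral_nonneg (hs.diff ht) fun x hx => mul_nonneg (hpos x hx) (hθ₀ x hx)
  have hin : ∫ x in t, h x ∂μ ≤ ∫ x in t, h x * θ x ∂μ :=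
    setIntegral_mono_on hh (hhθ.mono_set hts) ht fun x hx => by
      nlinarith [hneg x hx, hθ₁ x hx]
  linarith

theorem setIntegral_le_setIntegral_mul_of_affine_bound {f g θ : X → ℝ} {b c : ℝ}
    (hs : MeasurableSet s) (ht : MeasurableSet t) (hts : t ⊆ s) (htμ : μ t ≠ ⊤)
    (hf : IntegrableOn f t μ) (hg : IntegrableOn g t μ)
    (hfθ : IntegrableOn (fun x => f x * θ x) s μ)
    (hgθ : IntegrableOn (fun x => g x * θ x) s μ) (hθ : IntegrableOn θ s μ)
    (hθ₁ : ∀ x ∈ t, θ x ≤ 1) (hθ₀ : ∀ x ∈ s \ t, 0 ≤ θ x)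
    (hle : ∀ x ∈ t, f x ≤ b * g x + c) (hge : ∀ x ∈ s \ t, b * g x + c ≤ f x)
    (hmass : ∫ x in s, θ x ∂μ = μ.real t)
    (hmoment : ∫ x in s, g x * θ x ∂μ = ∫ x in t, g x ∂μ) :
    ∫ x in t, f x ∂μ ≤ ∫ x in s, f x * θ x ∂μ := by
  have hLt : IntegrableOn (fun x => b * g x + c) t μ :=
    (hg.const_mul b).add (integrableOn_const htμ)
  have hLθ : IntegrableOn (fun x => b * (g x * θ x) + c * θ x) s μ :=
    (hgθ.const_mul b).add (hθ.const_mul c)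
  have hLt_eq : ∫ x in t, (b * g x + c) ∂μ = b * ∫ x in t, g x ∂μ + c * μ.real t := by
    rw [integral_add (hg.const_mul b) (integrableOn_const htμ), integral_const_mul,
      setIntegral_const, smul_eq_mul, mul_comm c]
  have hLθ_eq :
      ∫ x in s, (b * (g x * θ x) + c * θ x) ∂μ = b * ∫ x in t, g x ∂μ + c * μ.real t := by
    rw [integral_add (hgθ.const_mul b) (hθ.const_mul c), integral_const_mul, integral_const_mul,
      hmoment, hmass]
  have key := setIntegral_le_setIntegral_mul_of_nonpos_of_nonneg
    (h := fun x => f x - (b * g x + c)) hs ht hts (hf.sub hLt)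
    (by simp only [sub_mul, add_mul, mul_assoc]; exact hfθ.sub hLθ)
    hθ₁ hθ₀ (fun x hx => sub_nonpos.2 (hle x hx)) (fun x hx => sub_nonneg.2 (hge x hx))
  simp only [sub_mul, add_mul, mul_assoc] at key
  rw [integral_sub hf hLt, integral_sub hfθ hLθ, hLt_eq, hLθ_eq] at key
  linarith

/-- Steffensen-type comparison: for `d ≥ 1`, `α > 0`, measurable `θ : [0,∞) → [0,1]`
with `∫_0^∞ θ(a) da = 1`, if `τ ≥ 0` satisfies
`∫_τ^{τ+1} a^d da = ∫_0^∞ a^d θ(a) da < ∞`, then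
`∫_τ^{τ+1} a^{α+d} da ≤ ∫_0^∞ a^{α+d} θ(a) da` (the right side may be `+∞`). -/
theorem steffensen_comparison (d : ℕ) (hd : 1 ≤ d) (α : ℝ) (hα : 0 < α)
    (θ : ℝ → ℝ) (hmeas : Measurable θ)
    (h01 : ∀ a, 0 ≤ a → 0 ≤ θ a ∧ θ a ≤ 1)
    (hint : ∫ a in Set.Ioi (0 : ℝ), θ a = 1)
    (hfin : IntegrableOn (fun a => a ^ d * θ a) (Set.Ioi 0))
    (τ : ℝ) (hτ : 0 ≤ τ)
    (hτeq : (∫ a in τ..(τ + 1), a ^ d) = ∫ a in Set.Ioi (0 : ℝ), a ^ d * θ a) :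
    ENNReal.ofReal (∫ a in τ..(τ + 1), a ^ (α + (d : ℝ)))
      ≤ ∫⁻ a in Set.Ioi (0 : ℝ), ENNReal.ofReal (a ^ (α + (d : ℝ)) * θ a) := by
  set q := α + (d : ℝ)
  have hcont : Continuous fun a : ℝ => a ^ q := Real.continuous_rpow_const (by positivity)
  have hnonneg : 0 ≤ᵐ[volume.restrict (Ioi 0)] fun a : ℝ => a ^ q * θ a :=
    (ae_restrict_iff' measurableSet_Ioi).2 <| ae_of_all _ fun a ha =>
      mul_nonneg (Real.rpow_nonneg ha.le q) (h01 a ha.le).1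
  by_cases htop : ∫⁻ a in Ioi 0, ENNReal.ofReal (a ^ q * θ a) = ⊤
  · exact htop ▸ le_top
  have hqθ : IntegrableOn (fun a : ℝ => a ^ q * θ a) (Ioi 0) :=
    (lintegral_ofReal_ne_top_iff_integrable (hcont.measurable.mul hmeas).aestronglyMeasurable
      hnonneg).1 htop
  obtain ⟨b, c, hle, hge⟩ :=
    exists_secant_line_rpow_in_pow (by omega : d ≠ 0) (by linarith : (d : ℝ) ≤ q) hτ (lt_add_one τ)
  have hcomp := setIntegral_le_setIntegral_mul_of_affine_bound 
    measurableSet_Ioi measurableSet_Ioc (fun a ha => hτ.trans_lt ha.1) (by simp)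
    hcont.integrableOn_Ioc (continuous_pow d).integrableOn_Ioc hqθ hfin
    (Integrable.of_integral_ne_zero (by rw [hint]; norm_num))
    (fun a ha => (h01 a (hτ.trans ha.1.le)).2) (fun a ha => (h01 a ha.1.le).1)
    (fun a ha => hle a (Ioc_subset_Icc_self ha))
    (fun a ha => hge a ha.1.le fun h => ha.2 (Ioo_subset_Ioc_self h))
    (by simp [hint]) (by rw [← hτeq, intervalIntegral.integral_of_le (by linarith)])
  rw [intervalIntegral.integral_of_le (by linarith),
    ← ofReal_integral_eq_lintegral_ofReal hqθ hnonneg]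
  exact ENNReal.ofReal_le_ofReal hcomp
end
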